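/- The semiring N₂ satisfies the identity u ≈ v if and only if the set of words of length 1 occurring as entries of u equals the set of words of length 1 occurring as entries of v. -/
import Mathlib



/-- The value in `Bool` (under multiplication `mul` and assignment `φ`) of a word,
i.e. a nonempty list of variables: the product of the images of its letters, in order.
(The value `false` on the empty list is junk; words are required to be nonempty.) -/
def wordVal (mul : Bool → Bool → Bool) (φ : ℕ → Bool) : List ℕ → Bool
  | [] => false
  | a :: rest => rest.foldl (fun acc x => mul acc (φ x)) (φ a)

/-- The value of a term, i.e. a nonempty list of words: the sum (under `add`) of the
values of its entries. (The value `false` on the empty list is junk; terms are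
required to be nonempty.) -/
def termVal (add mul : Bool → Bool → Bool) (φ : ℕ → Bool) : List (List ℕ) → Bool
  | [] => false
  | w :: rest => rest.foldl (fun acc q => add acc (wordVal mul φ q)) (wordVal mul φ w)

lemma foldl_false (l : List ℕ) (f : Bool → ℕ → Bool) (hf : ∀ x, f false x = false) :
    l.foldl f false = false := by
  induction l with
  | nil => rfl
  | cons a t ih => simp [List.foldl, hf, ih]

lemma wordVal_eq (φ : ℕ → Bool) (w : List ℕ) :
    wordVal (fun _ _ => false) φ w = (∃ a, w = [a] ∧ φ a = true) := by
  match w with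
  | [] => simp [wordVal]
  | [a] => simp [wordVal]
  | a :: b :: t =>
    simp only [wordVal, List.foldl]
    rw [foldl_false _ _ (fun _ => rfl)]
    simp

lemma foldl_or (g : List ℕ → Bool) (l : List (List ℕ)) (b : Bool) :
    l.foldl (fun acc q => acc || g q) b = (b || l.any g) := by
  induction l generalizing b with
  | nil => simp
  | cons a t ih => simp [List.foldl, ih, Bool.or_assoc]

lemma termVal_eq (φ : ℕ → Bool) (u : List (List ℕ)) :
    (termVal (fun x y => x || y) (fun _ _ => false) φ u = true)
      ↔ (∃ a, [a] ∈ u ∧ φ a = true) := by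
  match u with
  | [] => simp [termVal]
  | w :: rest =>
    simp only [termVal, foldl_or]
    simp only [Bool.or_eq_true, List.any_eq_true, wordVal_eq]
    constructor
    · rintro (⟨a, rfl, ha⟩ | ⟨q, hq, a, rfl, ha⟩)
      · exact ⟨a, by simp, ha⟩
      · exact ⟨a, by simp [hq], ha⟩
    · rintro ⟨a, hmem, ha⟩
      rcases List.mem_cons.mp hmem with h | h
      · exact Or.inl ⟨a, h.symm, ha⟩
      · exact Or.inr ⟨[a], h, a, rfl, ha⟩

/-- The two-element semiring on `Bool` with addition `add` and multiplication `mul`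
satisfies the identity `u ≈ v`. -/
def Satisfies (add mul : Bool → Bool → Bool) (u v : List (List ℕ)) : Prop :=
  ∀ φ : ℕ → Bool, termVal add mul φ u = termVal add mul φ v

/-- Lemma 1.1(5): `N₂` (addition `∨`, multiplication constantly `false`) satisfies
`u ≈ v` iff the set of length-one entries of `u` equals that of `v`. -/
theorem N2_satisfies_iff (u v : List (List ℕ))
    (hu : u ≠ []) (hv : v ≠ []) (hu' : ∀ w ∈ u, w ≠ []) (hv' : ∀ w ∈ v, w ≠ []) :
    Satisfies (fun x y => x || y) (fun _ _ => false) u v ↔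
      {w : List ℕ | w ∈ u ∧ w.length = 1} = {w : List ℕ | w ∈ v ∧ w.length = 1} := by
  have key : ∀ (x y : List (List ℕ)),
      (∀ φ : ℕ → Bool, termVal (fun a b => a || b) (fun _ _ => false) φ x
        = termVal (fun a b => a || b) (fun _ _ => false) φ y) →
      {w : List ℕ | w ∈ x ∧ w.length = 1} ⊆ {w : List ℕ | w ∈ y ∧ w.length = 1} := by
    intro x y h w hw
    obtain ⟨hwx, hlen⟩ := hw
    obtain ⟨a, rfl⟩ := List.length_eq_one_iff.mp hlen
    have := h (fun n => decide (n = a))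
    rw [Bool.eq_iff_iff, termVal_eq, termVal_eq] at this
    obtain ⟨b, hbv, hb⟩ := this.mp ⟨a, hwx, by simp⟩
    have : b = a := by simpa using hb
    subst this
    exact ⟨hbv, rfl⟩
  constructor
  · intro h
    exact Set.Subset.antisymm (key u v h) (key v u fun φ => (h φ).symm)
  · intro h φ
    rw [Bool.eq_iff_iff, termVal_eq, termVal_eq]
    have h' : ∀ a : ℕ, [a] ∈ u ↔ [a] ∈ v := by
      intro a
      have := Set.ext_iff.mp h [a]
      simpa using this
    constructor
    · rintro ⟨a, ha, hφ⟩; exact ⟨a, (h' a).mp ha, hφ⟩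
    · rintro ⟨a, ha, hφ⟩; exact ⟨a, (h' a).mpr ha, hφ⟩
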